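/- arXiv:2112.13993 — 6 statements merged into one kernel-verified Lean document; each statement's English description precedes it below -/
import Mathlib

section
/- For fixed real numbers c > 0 and a with 0 < a ≤ c/2, the sequence b_n = ψ(n+a) - ψ(n+1+c-a) is strictly increasing in n ∈ ℕ and converges to 0 as n → ∞. -/
/-- The digamma function ψ(x) = Γ'(x)/Γ(x), as the derivative of log ∘ Γ. -/
noncomputable def digamma (x : ℝ) : ℝ := deriv (fun y => Real.log (Real.Gamma y)) x

lemma diffAt_logGamma {x : ℝ} (hx : 0 < x) :
    DifferentiableAt ℝ (fun y => Real.log (Real.Gamma y)) x :=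
  (Real.differentiableAt_Gamma fun m => by
    have : (0:ℝ) ≤ m := Nat.cast_nonneg m
    intro h; rw [h] at hx; linarith).log (Real.Gamma_pos_of_pos hx).ne'

lemma hasDerivAt_logGamma {x : ℝ} (hx : 0 < x) :
    HasDerivAt (fun y => Real.log (Real.Gamma y)) (digamma x) x :=
  (diffAt_logGamma hx).hasDerivAt

lemma digamma_add_one {x : ℝ} (hx : 0 < x) : digamma (x + 1) = digamma x + 1 / x := by
  have h1 : HasDerivAt (fun y => Real.log (Real.Gamma (y + 1))) (digamma (x + 1)) x := by
    have := (hasDerivAt_logGamma (by linarith : (0:ℝ) < x + 1)).comp x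
      ((hasDerivAt_id x).add_const 1)
    rw [mul_one] at this; exact this
  have h2 : HasDerivAt (fun y => Real.log y + Real.log (Real.Gamma y))
      (1 / x + digamma x) x := by
    have := (Real.hasDerivAt_log hx.ne').add (hasDerivAt_logGamma hx)
    rw [one_div]; exact this
  have heq : (fun y => Real.log (Real.Gamma (y + 1))) =ᶠ[nhds x]
      (fun y => Real.log y + Real.log (Real.Gamma y)) := by
    filter_upwards [eventually_gt_nhds hx] with y hy
    rw [Real.Gamma_add_one hy.ne', Real.log_mul hy.ne' (Real.Gamma_pos_of_pos hy).ne']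
  have h1' : HasDerivAt (fun y => Real.log y + Real.log (Real.Gamma y))
      (digamma (x + 1)) x := h1.congr_of_eventuallyEq heq.symm
  have := h1'.unique h2
  linarith

lemma digamma_mono {x y : ℝ} (hx : 0 < x) (hxy : x ≤ y) : digamma x ≤ digamma y := by
  have h := Real.convexOn_log_Gamma.monotoneOn_deriv
    (fun z hz => diffAt_logGamma hz) (Set.mem_Ioi.mpr hx)
    (Set.mem_Ioi.mpr (lt_of_lt_of_le hx hxy)) hxy
  exact h

lemma digamma_add_nat {x : ℝ} (hx : 0 < x) (m : ℕ) :
    digamma (x + m) = digamma x + ∑ k ∈ Finset.range m, 1 / (x + k) := by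
  induction m with
  | zero => simp
  | succ n ih =>
    have hxn : (0:ℝ) < x + n := by positivity
    have : x + ((n:ℕ) + 1 : ℕ) = (x + n) + 1 := by push_cast; ring
    rw [this, digamma_add_one hxn, ih, Finset.sum_range_succ]; ring

theorem stmt_1 (c a : ℝ) (hc : 0 < c) (ha : 0 < a) (hac : a ≤ c / 2) :
    StrictMono (fun n : ℕ => digamma (n + a) - digamma (n + 1 + c - a)) ∧
    Filter.Tendsto (fun n : ℕ => digamma (n + a) - digamma (n + 1 + c - a))
      Filter.atTop (nhds 0) := by
  have ha' : a < 1 + c - a := by linarith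
  have hpos : ∀ n : ℕ, (0:ℝ) < n + a := fun n => by positivity
  have hpos2 : ∀ n : ℕ, (0:ℝ) < n + 1 + c - a := fun n => by
    have := hpos n; linarith
  constructor
  · apply strictMono_nat_of_lt_succ
    intro n
    have e1 : ((n+1 : ℕ) : ℝ) + a = (n + a) + 1 := by push_cast; ring
    have e2 : ((n+1 : ℕ) : ℝ) + 1 + c - a = (n + 1 + c - a) + 1 := by push_cast; ring
    simp only [e1, e2, digamma_add_one (hpos n), digamma_add_one (hpos2 n)]
    have : 1 / (n + 1 + c - a) < 1 / (n + a) :=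
      one_div_lt_one_div_of_lt (hpos n) (by linarith)
    linarith
  · set m : ℕ := ⌈1 + c - 2*a⌉₊ with hm
    have hmle : 1 + c - 2*a ≤ m := Nat.le_ceil _
    have hupper : ∀ n : ℕ, digamma (n + a) - digamma (n + 1 + c - a) ≤ 0 := fun n => by
      have := digamma_mono (hpos n) (by linarith : (n:ℝ) + a ≤ n + 1 + c - a)
      linarith
    have hlower : ∀ n : ℕ, -((m:ℝ) / (n + a)) ≤ digamma (n + a) - digamma (n + 1 + c - a) := by
      intro n
      have h1 : digamma (n + 1 + c - a) ≤ digamma ((n + a) + m) := by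
        apply digamma_mono (hpos2 n) (by linarith)
      have h2 : digamma ((n+a) + m) = digamma (n+a) + ∑ k ∈ Finset.range m, 1 / ((n+a) + k) :=
        digamma_add_nat (hpos n) m
      have h3 : ∑ k ∈ Finset.range m, 1 / ((n+a) + (k:ℝ)) ≤ (m:ℝ) / (n + a) := by
        calc ∑ k ∈ Finset.range m, 1 / ((n+a) + (k:ℝ))
            ≤ ∑ k ∈ Finset.range m, 1 / ((n:ℝ) + a) := by
              apply Finset.sum_le_sum
              intro k _
              apply one_div_le_one_div_of_le (hpos n)
              have : (0:ℝ) ≤ k := Nat.cast_nonneg k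
              linarith
          _ = (m:ℝ) / (n + a) := by
              rw [Finset.sum_const, Finset.card_range]; ring
      linarith
    have htend : Filter.Tendsto (fun n : ℕ => -((m:ℝ) / (n + a))) Filter.atTop (nhds 0) := by
      have h1 : Filter.Tendsto (fun n : ℕ => (n:ℝ) + a) Filter.atTop Filter.atTop :=
        Filter.tendsto_atTop_add_const_right _ a tendsto_natCast_atTop_atTop
      have h2 : Filter.Tendsto (fun n : ℕ => (m:ℝ) / (n + a)) Filter.atTop (nhds 0) := by
        simpa [div_eq_mul_inv] using h1.inv_tendsto_atTop.const_mul (m:ℝ)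
      simpa using h2.neg
    exact tendsto_of_tendsto_of_tendsto_of_le_of_le htend tendsto_const_nhds hlower hupper
end

section
/- For all c > 0, a ∈ (0, c/2] and x ∈ (0,1): F(a-1, c-a; c; x) - (1-x)F(a, c-a; c; x) = a Σ_{n≥0} [(a)_n (c-a)_n / ((n+c)(c)_n n!)] x^{n+1}. -/
/-- The Gaussian hypergeometric function ₂F₁(a,b;c;x) as a power series. -/
noncomputable def hypergeom (a b c x : ℝ) : ℝ :=
  ∑' n : ℕ, ((ascPochhammer ℝ n).eval a * (ascPochhammer ℝ n).eval b) /
    ((ascPochhammer ℝ n).eval c * n.factorial) * x ^ n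

open Filter Topology

lemma ascPochhammer_succ_eval_left (n : ℕ) (t : ℝ) :
    (ascPochhammer ℝ (n + 1)).eval t = t * (ascPochhammer ℝ n).eval (t + 1) := by
  rw [ascPochhammer_succ_left]
  simp [Polynomial.eval_comp]

lemma summable_hyp (b v c x : ℝ) (hc : 0 < c) (hx : x ∈ Set.Ioo (0 : ℝ) 1) :
    Summable (fun n : ℕ => ((ascPochhammer ℝ n).eval b * (ascPochhammer ℝ n).eval v) /
      ((ascPochhammer ℝ n).eval c * n.factorial) * x ^ n) := by
  obtain ⟨hx0, hx1⟩ := hx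
  set f : ℕ → ℝ := fun n => ((ascPochhammer ℝ n).eval b * (ascPochhammer ℝ n).eval v) /
      ((ascPochhammer ℝ n).eval c * n.factorial) * x ^ n with hf
  have hr1 : (1 + x) / 2 < 1 := by linarith
  apply summable_of_ratio_norm_eventually_le hr1
  -- the comparison ratio tends to x
  have htend : Tendsto (fun n : ℕ => (((n : ℝ) + |b|) / ((n : ℝ) + 1)) *
      (((n : ℝ) + |v|) / ((n : ℝ) + c)) * x) atTop (nhds x) := by
    have h1 : Tendsto (fun n : ℕ => ((n : ℝ) + |b|) / ((n : ℝ) + 1)) atTop (nhds 1) := by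
      have : (fun n : ℕ => ((n : ℝ) + |b|) / ((n : ℝ) + 1)) =
          fun n : ℕ => 1 + (|b| - 1) / ((n : ℝ) + 1) := by
        funext n
        have hn : ((n : ℝ) + 1) ≠ 0 := by positivity
        field_simp
        ring
      rw [this]
      have : Tendsto (fun n : ℕ => (|b| - 1) / ((n : ℝ) + 1)) atTop (nhds 0) :=
        tendsto_const_nhds.div_atTop (tendsto_atTop_add_const_right _ _ tendsto_natCast_atTop_atTop)
      simpa using tendsto_const_nhds.add this
    have h2 : Tendsto (fun n : ℕ => ((n : ℝ) + |v|) / ((n : ℝ) + c)) atTop (nhds 1) := by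
      have : (fun n : ℕ => ((n : ℝ) + |v|) / ((n : ℝ) + c)) =
          fun n : ℕ => 1 + (|v| - c) / ((n : ℝ) + c) := by
        funext n
        have hn : ((n : ℝ) + c) ≠ 0 := by positivity
        field_simp
        ring
      rw [this]
      have : Tendsto (fun n : ℕ => (|v| - c) / ((n : ℝ) + c)) atTop (nhds 0) :=
        tendsto_const_nhds.div_atTop (tendsto_atTop_add_const_right _ _ tendsto_natCast_atTop_atTop)
      simpa using tendsto_const_nhds.add this
    have := (h1.mul h2).mul_const x
    simpa using this
  have hev : ∀ᶠ n : ℕ in atTop, (((n : ℝ) + |b|) / ((n : ℝ) + 1)) *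
      (((n : ℝ) + |v|) / ((n : ℝ) + c)) * x ≤ (1 + x) / 2 := by
    have : x < (1 + x) / 2 := by linarith
    exact (htend.eventually_le_const this).mono fun n h => h
  filter_upwards [hev] with n hn
  have hcn : (0 : ℝ) < (ascPochhammer ℝ n).eval c := ascPochhammer_pos n c hc
  have hfacn : (0 : ℝ) < (n.factorial : ℝ) := by positivity
  have hxc : (0 : ℝ) < (n : ℝ) + c := by positivity
  have hn1 : (0 : ℝ) < (n : ℝ) + 1 := by positivity
  -- f (n+1) = f n * ((b+n)*(v+n)/((c+n)*(n+1)) * x)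
  have hstep : f (n + 1) = f n * ((b + n) * (v + n) / (((n : ℝ) + c) * ((n : ℝ) + 1)) * x) := by
    simp only [hf, ascPochhammer_succ_eval, Nat.factorial_succ, pow_succ, Nat.cast_mul,
      Nat.cast_add, Nat.cast_one]
    field_simp
    ring
  rw [hstep, norm_mul, mul_comm (‖f n‖)]
  gcongr ?_ * ‖f n‖
  rw [Real.norm_eq_abs, abs_mul, abs_div, abs_mul, abs_mul]
  rw [abs_of_pos hxc, abs_of_pos hn1, abs_of_pos hx0]
  have habs_b : |b + (n:ℝ)| ≤ (n : ℝ) + |b| := by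
    calc |b + (n:ℝ)| ≤ |b| + |(n:ℝ)| := abs_add_le _ _
      _ = (n : ℝ) + |b| := by rw [Nat.abs_cast]; ring
  have habs_v : |v + (n:ℝ)| ≤ (n : ℝ) + |v| := by
    calc |v + (n:ℝ)| ≤ |v| + |(n:ℝ)| := abs_add_le _ _
      _ = (n : ℝ) + |v| := by rw [Nat.abs_cast]; ring
  calc |b + (n:ℝ)| * |v + (n:ℝ)| / (((n:ℝ) + c) * ((n:ℝ) + 1)) * x
      ≤ (((n:ℝ) + |b|) * ((n:ℝ) + |v|)) / (((n:ℝ) + c) * ((n:ℝ) + 1)) * x := by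
        gcongr
    _ = ((n:ℝ) + |b|) / ((n:ℝ) + 1) * (((n:ℝ) + |v|) / ((n:ℝ) + c)) * x := by rw [div_mul_div_comm]; ring_nf
    _ ≤ (1 + x) / 2 := hn

theorem stmt_11 (c a x : ℝ) (hc : 0 < c) (ha : 0 < a) (hac : a ≤ c / 2)
    (hx : x ∈ Set.Ioo (0 : ℝ) 1) :
    hypergeom (a - 1) (c - a) c x - (1 - x) * hypergeom a (c - a) c x =
      a * ∑' n : ℕ, ((ascPochhammer ℝ n).eval a * (ascPochhammer ℝ n).eval (c - a)) /
        ((n + c) * (ascPochhammer ℝ n).eval c * n.factorial) * x ^ (n + 1) := by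
  obtain ⟨hx0, hx1⟩ := hx
  set B : ℕ → ℝ := fun n => ((ascPochhammer ℝ n).eval (a - 1) * (ascPochhammer ℝ n).eval (c - a)) /
    ((ascPochhammer ℝ n).eval c * n.factorial) * x ^ n with hB
  set A : ℕ → ℝ := fun n => ((ascPochhammer ℝ n).eval a * (ascPochhammer ℝ n).eval (c - a)) /
    ((ascPochhammer ℝ n).eval c * n.factorial) * x ^ n with hA
  set H : ℕ → ℝ := fun n => a * (((ascPochhammer ℝ n).eval a * (ascPochhammer ℝ n).eval (c - a)) /
    (((n : ℝ) + c) * (ascPochhammer ℝ n).eval c * n.factorial) * x ^ (n + 1)) with hH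
  have hsB : Summable B := summable_hyp _ _ _ _ hc ⟨hx0, hx1⟩
  have hsA : Summable A := summable_hyp _ _ _ _ hc ⟨hx0, hx1⟩
  -- key coefficient identity
  have key : ∀ n : ℕ, B (n + 1) - A (n + 1) + x * A n = H n := by
    intro n
    have hcn : (0 : ℝ) < (ascPochhammer ℝ n).eval c := ascPochhammer_pos n c hc
    have hfacn : (0 : ℝ) < (n.factorial : ℝ) := by positivity
    have hxc : (0 : ℝ) < (n : ℝ) + c := by positivity
    have hBl : (ascPochhammer ℝ (n + 1)).eval (a - 1)
        = (a - 1) * (ascPochhammer ℝ n).eval a := by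
      rw [ascPochhammer_succ_eval_left]; norm_num
    simp only [hB, hA, hH, ascPochhammer_succ_eval, hBl, Nat.factorial_succ, pow_succ,
      Nat.cast_mul, Nat.cast_add, Nat.cast_one]
    field_simp
    ring
  have hsub : Summable (fun n => B n - A n) := hsB.sub hsA
  have hsub' : Summable (fun n => B (n + 1) - A (n + 1)) := by
    exact_mod_cast (summable_nat_add_iff 1).mpr hsub
  have hxA : Summable (fun n => x * A n) := hsA.mul_left x
  have e1 : hypergeom (a - 1) (c - a) c x = ∑' n, B n := rfl
  have e2 : hypergeom a (c - a) c x = ∑' n, A n := rfl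
  have hB0 : B 0 - A 0 = 0 := by simp [hB, hA]
  calc hypergeom (a - 1) (c - a) c x - (1 - x) * hypergeom a (c - a) c x
      = (∑' n, B n - ∑' n, A n) + x * ∑' n, A n := by rw [e1, e2]; ring
    _ = (∑' n, (B n - A n)) + ∑' n, x * A n := by
        rw [Summable.tsum_sub hsB hsA, tsum_mul_left]
    _ = ((B 0 - A 0) + ∑' n, (B (n + 1) - A (n + 1))) + ∑' n, x * A n := by
        rw [Summable.tsum_eq_zero_add hsub]
    _ = ∑' n, ((B (n + 1) - A (n + 1)) + x * A n) := by
        rw [hB0, zero_add, ← Summable.tsum_add hsub' hxA]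
    _ = ∑' n, H n := by exact tsum_congr fun n => key n
    _ = a * ∑' n : ℕ, ((ascPochhammer ℝ n).eval a * (ascPochhammer ℝ n).eval (c - a)) /
        ((n + c) * (ascPochhammer ℝ n).eval c * n.factorial) * x ^ (n + 1) := by
        rw [hH, tsum_mul_left]
end

section
/- For each fixed c ∈ (0,1] and x ∈ (0,1), the function a ↦ F(a, c-a; c; x) - 1 is strictly increasing in a on (0, c/2], and the function a ↦ (F(a, c-a; c; x) - 1)/a is strictly decreasing in a on (0, c/2]. Consequently, for c ∈ (0,1], a ∈ (0, c/2], x ∈ (0,1): 1 + (2a/c)·Σ_{n≥1} (c/2)_n² x^n/((c)_n n!) ≤ F(a, c-a; c; x) ≤ 1 + min{ Σ_{n≥1} (c/2)_n² x^n/((c)_n n!), a·log(1/(1-x)) }. -/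
open Finset

noncomputable def Qf (t : ℝ) (n : ℕ) : ℝ := ∏ k ∈ range n, (t + k)

lemma poch_eq (t : ℝ) (n : ℕ) : (ascPochhammer ℝ n).eval t = Qf t n := by
  induction n with
  | zero => simp [Qf]
  | succ n ih => rw [ascPochhammer_succ_eval, ih, Qf, Qf, prod_range_succ]

lemma Qf_pos {t : ℝ} (ht : 0 < t) (n : ℕ) : 0 < Qf t n :=
  Finset.prod_pos fun k _ => by positivity

lemma Qf_mono {t u : ℝ} (ht : 0 < t) (htu : t ≤ u) (n : ℕ) : Qf t n ≤ Qf u n :=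
  Finset.prod_le_prod (fun k _ => by positivity) (fun k _ => by linarith)

lemma Qf_le_factorial {t : ℝ} (ht : 0 < t) (ht1 : t ≤ 1) (n : ℕ) :
    Qf t n ≤ n.factorial := by
  calc Qf t n ≤ Qf 1 n := Qf_mono ht ht1 n
  _ = n.factorial := by
    rw [Qf, ← Finset.prod_range_add_one_eq_factorial, Nat.cast_prod]
    exact Finset.prod_congr rfl fun k _ => by push_cast; ring

lemma weier (t : ℕ → ℝ) (ht : ∀ k, 0 ≤ t k) (m : ℕ) :
    (∏ k ∈ range m, (1 + t k)) * (1 - ∑ k ∈ range m, t k) ≤ 1 := by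
  induction m with
  | zero => simp
  | succ m ih =>
    rw [prod_range_succ, sum_range_succ]
    have h1 : (0:ℝ) ≤ ∏ k ∈ range m, (1 + t k) :=
      Finset.prod_nonneg fun k _ => by have := ht k; linarith
    have h2 := ht m
    have hs : 0 ≤ ∑ k ∈ range m, t k := Finset.sum_nonneg fun k _ => ht k
    have key : (1 + t m) * (1 - (∑ k ∈ range m, t k + t m)) ≤ 1 - ∑ k ∈ range m, t k := by
      nlinarith
    calc (∏ k ∈ range m, (1 + t k)) * (1 + t m) * (1 - (∑ k ∈ range m, t k + t m))
        = (∏ k ∈ range m, (1 + t k)) * ((1 + t m) * (1 - (∑ k ∈ range m, t k + t m))) := by ring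
      _ ≤ (∏ k ∈ range m, (1 + t k)) * (1 - ∑ k ∈ range m, t k) :=
          mul_le_mul_of_nonneg_left key h1
      _ ≤ 1 := ih

lemma prod_one_add_le (t : ℕ → ℝ) (ht : ∀ k, 0 ≤ t k) (m : ℕ) (S : ℝ)
    (hle : ∑ k ∈ range m, t k ≤ S) (hS : S < 1) :
    ∏ k ∈ range m, (1 + t k) ≤ 1 / (1 - S) := by
  have hw := weier t ht m
  have h1 : (0:ℝ) < 1 - S := by linarith
  have h2 : (0:ℝ) < 1 - ∑ k ∈ range m, t k := by linarith
  have hp : ∏ k ∈ range m, (1 + t k) ≤ 1 / (1 - ∑ k ∈ range m, t k) := by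
    rw [le_div_iff₀ h2]; exact hw
  refine hp.trans ?_
  apply one_div_le_one_div_of_le h1; linarith


-- core product perturbation lemma
lemma prodD (p s D : ℝ) (hp : 0 ≤ p) (hs0 : 0 < s) (hs1 : s ≤ 1) (hD : 0 ≤ D)
    (hDs : D < s) (m : ℕ) :
    ∏ k ∈ range m, ((p + (k + 1)) * (s + (k + 1)) + D) ≤
      (s / (s - D)) * ∏ k ∈ range m, ((p + (k + 1)) * (s + (k + 1))) := by
  set u : ℕ → ℝ := fun k => (p + (k + 1)) * (s + (k + 1)) with hu
  have hupos : ∀ k : ℕ, 0 < u k := fun k => by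
    have : (0:ℝ) < (k:ℝ) + 1 := by positivity
    simp only [hu]; nlinarith
  set t : ℕ → ℝ := fun k => D / u k with htdef
  have ht0 : ∀ k, 0 ≤ t k := fun k => div_nonneg hD (hupos k).le
  have hterm : ∀ k : ℕ, t k ≤ (D / s) * (1 / (k + 1) - 1 / (k + 2)) := by
    intro k
    have hk1 : (0:ℝ) < (k:ℝ) + 1 := by positivity
    have hk2 : (0:ℝ) < (k:ℝ) + 2 := by positivity
    have heq : (1:ℝ) / (k + 1) - 1 / (k + 2) = 1 / ((k + 1) * (k + 2)) := by
      field_simp; ring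
    rw [heq, htdef]
    have hb : s * (((k:ℝ) + 1) * ((k:ℝ) + 2)) ≤ u k := by
      simp only [hu]; nlinarith [sq_nonneg ((k:ℝ)+1)]
    have hbpos : (0:ℝ) < s * (((k:ℝ) + 1) * ((k:ℝ) + 2)) := by positivity
    calc D / u k ≤ D / (s * (((k:ℝ) + 1) * ((k:ℝ) + 2))) :=
          div_le_div_of_nonneg_left hD hbpos hb
      _ = D / s * (1 / (((k:ℝ) + 1) * ((k:ℝ) + 2))) := by
          rw [div_mul_div_comm]; ring_nf
      _ ≤ D / s * (1 / (((k:ℝ) + 1) * ((k:ℝ) + 2))) := le_refl _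
  have hsum : ∑ k ∈ range m, t k ≤ D / s := by
    calc ∑ k ∈ range m, t k ≤ ∑ k ∈ range m, (D / s) * (1 / (k + 1) - 1 / (k + 2)) :=
          Finset.sum_le_sum fun k _ => hterm k
      _ = (D / s) * ∑ k ∈ range m, ((fun j : ℕ => 1 / ((j:ℝ) + 1)) k
            - (fun j : ℕ => 1 / ((j:ℝ) + 1)) (k + 1)) := by
          rw [Finset.mul_sum]; exact Finset.sum_congr rfl fun k _ => by push_cast; ring
      _ = (D / s) * (1 / ((0:ℕ) + 1 : ℝ) - 1 / ((m:ℝ) + 1)) := by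
          rw [Finset.sum_range_sub' (fun j : ℕ => 1 / ((j:ℝ) + 1)) m]
      _ ≤ D / s := by
          have h1 : (0:ℝ) ≤ 1 / ((m:ℝ) + 1) := by positivity
          have h2 : (0:ℝ) ≤ D / s := div_nonneg hD hs0.le
          nlinarith [mul_nonneg h2 h1]
  have hS1 : D / s < 1 := (div_lt_one hs0).mpr hDs
  have hprod : ∏ k ∈ range m, (1 + t k) ≤ 1 / (1 - D / s) :=
    prod_one_add_le t ht0 m (D / s) hsum hS1
  have hsplit : ∏ k ∈ range m, (u k + D) = (∏ k ∈ range m, u k) * ∏ k ∈ range m, (1 + t k) := by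
    rw [← Finset.prod_mul_distrib]
    exact Finset.prod_congr rfl fun k _ => by
      show u k + D = u k * (1 + D / u k)
      rw [mul_add, mul_div_cancel₀ _ (hupos k).ne', mul_one]
  have h1 : (0:ℝ) < ∏ k ∈ range m, u k := Finset.prod_pos fun k _ => hupos k
  have heq2 : (1:ℝ) / (1 - D / s) = s / (s - D) := by
    have hx : 1 - D / s = (s - D) / s := by field_simp
    rw [hx, one_div_div]
  calc ∏ k ∈ range m, (u k + D) = (∏ k ∈ range m, u k) * ∏ k ∈ range m, (1 + t k) := hsplit
    _ ≤ (∏ k ∈ range m, u k) * (1 / (1 - D / s)) := mul_le_mul_of_nonneg_left hprod h1.le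
    _ = (s / (s - D)) * ∏ k ∈ range m, u k := by rw [heq2]; ring

noncomputable def Tf (c x a : ℝ) (n : ℕ) : ℝ :=
  Qf a n * Qf (c - a) n / (Qf c n * n.factorial) * x ^ n

lemma num_prod (a b : ℝ) (n : ℕ) :
    Qf a n * Qf b n = ∏ k ∈ range n, ((a + k) * (b + k)) :=
  (Finset.prod_mul_distrib).symm

lemma num_succ (a b : ℝ) (n : ℕ) :
    Qf a (n+1) * Qf b (n+1) = (a * b) * ∏ k ∈ range n, ((a + (k+1)) * (b + (k+1))) := by
  rw [num_prod, prod_range_succ' (fun k : ℕ => ((a + k) * (b + k)))]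
  have h : ∏ k ∈ range n, ((a + ((k:ℕ)+1 : ℕ)) * (b + ((k:ℕ)+1 : ℕ)))
      = ∏ k ∈ range n, ((a + ((k:ℝ)+1)) * (b + ((k:ℝ)+1))) :=
    Finset.prod_congr rfl fun k _ => by push_cast; ring
  rw [h]; push_cast; ring

lemma Tf_zero (c x a : ℝ) : Tf c x a 0 = 1 := by simp [Tf, Qf]

lemma Tf_one (c x a : ℝ) (hc0 : 0 < c) : Tf c x a 1 = a * (c - a) / c * x := by
  simp [Tf, Qf, Finset.prod_range_one]

section main
variable {c x a : ℝ}

lemma Tf_pos (hc0 : 0 < c) (hx0 : 0 < x) (ha0 : 0 < a) (hac : a < c) (n : ℕ) :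
    0 < Tf c x a n := by
  have h1 := Qf_pos ha0 n
  have h2 := Qf_pos (by linarith : (0:ℝ) < c - a) n
  have h3 := Qf_pos hc0 n
  have h4 : (0:ℝ) < n.factorial := by positivity
  have h5 : (0:ℝ) < x ^ n := by positivity
  unfold Tf; positivity

lemma Tf_le_geom' (hc0 : 0 < c) (hc1 : c ≤ 1) (hx0 : 0 < x) (ha0 : 0 < a) (hac : a < c)
    (hca1 : c - a ≤ 1) (n : ℕ) : Tf c x a n ≤ x ^ n := by
  have hca0 : (0:ℝ) < c - a := by linarith
  have h1 : Qf a n ≤ Qf c n := Qf_mono ha0 (by linarith) n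
  have h2 : Qf (c - a) n ≤ n.factorial := Qf_le_factorial hca0 hca1 n
  have h3 : 0 < Qf c n := Qf_pos hc0 n
  have h4 : (0:ℝ) < n.factorial := by positivity
  have h5 : (0:ℝ) ≤ x ^ n := by positivity
  unfold Tf
  have hnum : Qf a n * Qf (c - a) n ≤ Qf c n * n.factorial :=
    mul_le_mul h1 h2 (Qf_pos hca0 n).le h3.le
  have : Qf a n * Qf (c - a) n / (Qf c n * n.factorial) ≤ 1 := by
    rw [div_le_one (by positivity)]; exact hnum
  nlinarith [Qf_pos ha0 n, Qf_pos hca0 n, mul_pos h3 h4]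

lemma Tf_summable (hc0 : 0 < c) (hc1 : c ≤ 1) (hx0 : 0 < x) (hx1 : x < 1)
    (ha0 : 0 < a) (hac : a < c) (hca1 : c - a ≤ 1) : Summable (Tf c x a) :=
  Summable.of_nonneg_of_le (fun n => (Tf_pos hc0 hx0 ha0 hac n).le)
    (fun n => Tf_le_geom' hc0 hc1 hx0 ha0 hac hca1 n)
    (summable_geometric_of_lt_one hx0.le hx1)

lemma hypergeom_eq (b : ℝ) : hypergeom a b c x =
    ∑' n : ℕ, Qf a n * Qf b n / (Qf c n * n.factorial) * x ^ n := by
  unfold hypergeom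
  exact tsum_congr fun n => by rw [poch_eq, poch_eq, poch_eq]

lemma hypergeom_sub_one (hc0 : 0 < c) (hc1 : c ≤ 1) (hx0 : 0 < x) (hx1 : x < 1)
    (ha0 : 0 < a) (hac : a < c) (hca1 : c - a ≤ 1) :
    hypergeom a (c - a) c x - 1 = ∑' n : ℕ, Tf c x a (n + 1) := by
  have hs := Tf_summable hc0 hc1 hx0 hx1 ha0 hac hca1
  have : hypergeom a (c - a) c x = ∑' n : ℕ, Tf c x a n := hypergeom_eq (c - a)
  rw [this, hs.tsum_eq_zero_add, Tf_zero]
  ring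

end main

section cmp
variable {c x a a1 a2 : ℝ}

lemma parab_le (h01 : 0 < a1) (h12 : a1 ≤ a2) (h2c : a2 ≤ c / 2) :
    a1 * (c - a1) ≤ a2 * (c - a2) := by nlinarith

lemma parab_lt (h01 : 0 < a1) (h12 : a1 < a2) (h2c : a2 ≤ c / 2) :
    a1 * (c - a1) < a2 * (c - a2) := by nlinarith

lemma Tf_mono_le (hc0 : 0 < c) (hx0 : 0 < x) (h01 : 0 < a1) (h12 : a1 ≤ a2)
    (h2c : a2 ≤ c / 2) (n : ℕ) : Tf c x a1 n ≤ Tf c x a2 n := by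
  have hpar := parab_le h01 h12 h2c
  have hnum : Qf a1 n * Qf (c - a1) n ≤ Qf a2 n * Qf (c - a2) n := by
    rw [num_prod, num_prod]
    refine Finset.prod_le_prod (fun k _ => ?_) (fun k _ => ?_)
    · have hk : (0:ℝ) ≤ (k:ℝ) := Nat.cast_nonneg k
      nlinarith
    · have hk : (0:ℝ) ≤ (k:ℝ) := Nat.cast_nonneg k
      nlinarith
  have hden : (0:ℝ) < Qf c n * n.factorial := by
    have := Qf_pos hc0 n
    positivity
  have hxn : (0:ℝ) ≤ x ^ n := by positivity
  unfold Tf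
  gcongr

lemma Tf_mono_lt1 (hc0 : 0 < c) (hx0 : 0 < x) (h01 : 0 < a1) (h12 : a1 < a2)
    (h2c : a2 ≤ c / 2) : Tf c x a1 1 < Tf c x a2 1 := by
  rw [Tf_one c x a1 hc0, Tf_one c x a2 hc0]
  have hpar := parab_lt h01 h12 h2c
  have h1 : a1 * (c - a1) / c < a2 * (c - a2) / c :=
    div_lt_div_of_pos_right hpar hc0
  exact mul_lt_mul_of_pos_right h1 hx0

lemma anti_num (hc0 : 0 < c) (hc1 : c ≤ 1) (h01 : 0 < a1) (h12 : a1 ≤ a2)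
    (h2c : a2 ≤ c / 2) (n : ℕ) :
    a1 * (Qf a2 (n+1) * Qf (c - a2) (n+1)) ≤ a2 * (Qf a1 (n+1) * Qf (c - a1) (n+1)) := by
  rw [num_succ, num_succ]
  set s : ℝ := c - a1 with hsdef
  set d : ℝ := (a2 - a1) * (c - a1 - a2) with hddef
  have ha2c : a2 < c := by linarith
  have hs0 : 0 < s := by simp only [hsdef]; linarith
  have hs1 : s ≤ 1 := by simp only [hsdef]; linarith
  have hd0 : 0 ≤ d := by simp only [hddef]; nlinarith
  have hds : d < s := by simp only [hddef, hsdef]; nlinarith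
  have hP2 : (∏ k ∈ range n, ((a2 + ((k:ℝ)+1)) * (c - a2 + ((k:ℝ)+1))))
      = ∏ k ∈ range n, ((a1 + ((k:ℝ)+1)) * (s + ((k:ℝ)+1)) + d) :=
    Finset.prod_congr rfl fun k _ => by simp only [hsdef, hddef]; ring
  have hP2le := (hP2 ▸ prodD a1 s d h01.le hs0 hs1 hd0 hds n :
    (∏ k ∈ range n, ((a2 + ((k:ℝ)+1)) * (c - a2 + ((k:ℝ)+1)))) ≤
      (s / (s - d)) * ∏ k ∈ range n, ((a1 + ((k:ℝ)+1)) * (s + ((k:ℝ)+1))))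
  have hP1 : ∏ k ∈ range n, ((a1 + ((k:ℝ)+1)) * (c - a1 + ((k:ℝ)+1)))
      = ∏ k ∈ range n, ((a1 + ((k:ℝ)+1)) * (s + ((k:ℝ)+1))) := by rw [hsdef]
  set P1 : ℝ := ∏ k ∈ range n, ((a1 + ((k:ℝ)+1)) * (s + ((k:ℝ)+1))) with hP1def
  have hP1pos : 0 < P1 :=
    Finset.prod_pos fun k _ => by
      have : (0:ℝ) < (k:ℝ) + 1 := by positivity
      nlinarith
  have hsd : 0 < s - d := by linarith
  have hkey : (c - a2) * (s / (s - d)) ≤ s := by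
    have h9 : c - a2 ≤ s - d := by simp only [hsdef, hddef]; nlinarith
    have h10 : (c - a2) / (s - d) ≤ 1 := (div_le_one hsd).mpr h9
    calc (c - a2) * (s / (s - d)) = ((c - a2) / (s - d)) * s := by ring
      _ ≤ 1 * s := mul_le_mul_of_nonneg_right h10 hs0.le
      _ = s := one_mul s
  have hca2 : 0 ≤ c - a2 := by linarith
  rw [hP1]
  calc a1 * (a2 * (c - a2) * ∏ k ∈ range n, ((a2 + ((k:ℝ)+1)) * (c - a2 + ((k:ℝ)+1))))
      ≤ a1 * (a2 * (c - a2) * ((s / (s - d)) * P1)) := by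
        have := mul_le_mul_of_nonneg_left hP2le
          (mul_nonneg h01.le (mul_nonneg (by linarith) hca2) : (0:ℝ) ≤ a1 * (a2 * (c - a2)))
        calc a1 * (a2 * (c - a2) * ∏ k ∈ range n, ((a2 + ((k:ℝ)+1)) * (c - a2 + ((k:ℝ)+1))))
            = a1 * (a2 * (c - a2)) * ∏ k ∈ range n, ((a2 + ((k:ℝ)+1)) * (c - a2 + ((k:ℝ)+1))) := by ring
          _ ≤ a1 * (a2 * (c - a2)) * ((s / (s - d)) * P1) := this
          _ = a1 * (a2 * (c - a2) * ((s / (s - d)) * P1)) := by ring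
    _ = (a1 * a2 * P1) * ((c - a2) * (s / (s - d))) := by ring
    _ ≤ (a1 * a2 * P1) * s :=
        mul_le_mul_of_nonneg_left hkey
          (mul_nonneg (mul_nonneg h01.le (by linarith)) hP1pos.le)
    _ = a2 * (a1 * s * P1) := by ring

lemma log_num (hc0 : 0 < c) (hc1 : c ≤ 1) (ha0 : 0 < a) (hac : a ≤ c / 2) (n : ℕ) :
    Qf a (n+1) * Qf (c - a) (n+1) ≤ (a / (n+1)) * (Qf c (n+1) * (n+1).factorial) := by
  rw [num_succ]
  set D : ℝ := a * (c - a) with hDdef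
  have hac' : a < c := by linarith
  have hD0 : 0 ≤ D := by simp only [hDdef]; nlinarith
  have hDa : D ≤ a := by simp only [hDdef]; nlinarith
  have hDc : D < c := by linarith
  have hQc : Qf c (n+1) = (∏ k ∈ range n, (c + ((k:ℝ)+1))) * c := by
    rw [Qf, prod_range_succ' (fun k : ℕ => (c + (k:ℝ)))]
    push_cast; ring
  have hfac : (((n+1).factorial : ℕ) : ℝ) = ((n:ℝ)+1) * ∏ k ∈ range n, ((k:ℝ)+1) := by
    rw [Nat.factorial_succ]
    push_cast [← Finset.prod_range_add_one_eq_factorial]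
    ring
  have hmatch : ∏ k ∈ range n, ((a + ((k:ℝ)+1)) * (c - a + ((k:ℝ)+1)))
      = ∏ k ∈ range n, ((0 + ((k:ℝ)+1)) * (c + ((k:ℝ)+1)) + D) :=
    Finset.prod_congr rfl fun k _ => by simp only [hDdef]; ring
  have hle := hmatch ▸ prodD 0 c D le_rfl hc0 hc1 hD0 hDc n
  set P0 : ℝ := ∏ k ∈ range n, ((0 + ((k:ℝ)+1)) * (c + ((k:ℝ)+1))) with hP0def
  have hP0pos : 0 < P0 := Finset.prod_pos fun k _ => by
    have : (0:ℝ) < (k:ℝ) + 1 := by positivity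
    nlinarith
  have hkey : (c - a) * (c / (c - D)) ≤ c := by
    have h9 : c - a ≤ c - D := by linarith
    have hcd : 0 < c - D := by linarith
    have h10 : (c - a) / (c - D) ≤ 1 := (div_le_one hcd).mpr h9
    calc (c - a) * (c / (c - D)) = ((c - a) / (c - D)) * c := by ring
      _ ≤ 1 * c := mul_le_mul_of_nonneg_right h10 hc0.le
      _ = c := one_mul c
  have hpp : P0 = (∏ k ∈ range n, (c + ((k:ℝ)+1))) * ∏ k ∈ range n, ((k:ℝ)+1) := by
    rw [hP0def, ← Finset.prod_mul_distrib]
    exact Finset.prod_congr rfl fun k _ => by ring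
  have hsplit : (a / ((n:ℝ)+1)) * (Qf c (n+1) * ((n+1).factorial : ℕ)) = a * c * P0 := by
    rw [hQc, hfac, hpp]
    have hne : ((n:ℝ)+1) ≠ 0 := by positivity
    field_simp
  push_cast at hsplit ⊢
  rw [hsplit]
  calc a * (c - a) * ∏ k ∈ range n, ((a + ((k:ℝ)+1)) * (c - a + ((k:ℝ)+1)))
      ≤ a * (c - a) * ((c / (c - D)) * P0) := by
        exact mul_le_mul_of_nonneg_left hle (by nlinarith)
    _ = (a * P0) * ((c - a) * (c / (c - D))) := by ring
    _ ≤ (a * P0) * c := mul_le_mul_of_nonneg_left hkey (by positivity)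
    _ = a * c * P0 := by ring

end cmp

section final
variable {c x a a1 a2 : ℝ}

lemma Tf_anti (hc0 : 0 < c) (hc1 : c ≤ 1) (hx0 : 0 < x) (h01 : 0 < a1) (h12 : a1 ≤ a2)
    (h2c : a2 ≤ c / 2) (n : ℕ) :
    Tf c x a2 (n+1) / a2 ≤ Tf c x a1 (n+1) / a1 := by
  have ha20 : 0 < a2 := lt_of_lt_of_le h01 h12
  have hnum := anti_num hc0 hc1 h01 h12 h2c n
  rw [div_le_div_iff₀ ha20 h01]
  have hden : (0:ℝ) < Qf c (n+1) * (n+1).factorial := by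
    have := Qf_pos hc0 (n+1); positivity
  have hxp : (0:ℝ) ≤ x ^ (n+1) := by positivity
  unfold Tf
  calc Qf a2 (n+1) * Qf (c - a2) (n+1) / (Qf c (n+1) * (n+1).factorial) * x ^ (n+1) * a1
      = (a1 * (Qf a2 (n+1) * Qf (c - a2) (n+1))) / (Qf c (n+1) * (n+1).factorial) * x ^ (n+1) := by
        ring
    _ ≤ (a2 * (Qf a1 (n+1) * Qf (c - a1) (n+1))) / (Qf c (n+1) * (n+1).factorial) * x ^ (n+1) := by
        gcongr
    _ = Qf a1 (n+1) * Qf (c - a1) (n+1) / (Qf c (n+1) * (n+1).factorial) * x ^ (n+1) * a2 := by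
        ring

lemma Tf_anti_lt1 (hc0 : 0 < c) (hx0 : 0 < x) (h01 : 0 < a1) (h12 : a1 < a2)
    (h2c : a2 ≤ c / 2) : Tf c x a2 1 / a2 < Tf c x a1 1 / a1 := by
  have ha20 : 0 < a2 := h01.trans h12
  have key : ∀ b : ℝ, 0 < b → Tf c x b 1 / b = (c - b) * x / c := by
    intro b hb
    rw [Tf_one c x b hc0]
    field_simp
  rw [key a1 h01, key a2 ha20]
  apply div_lt_div_of_pos_right _ hc0
  exact mul_lt_mul_of_pos_right (by linarith) hx0

lemma Tf_le_log_term (hc0 : 0 < c) (hc1 : c ≤ 1) (hx0 : 0 < x) (ha0 : 0 < a)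
    (hac : a ≤ c / 2) (n : ℕ) :
    Tf c x a (n+1) ≤ a * (x ^ (n+1) / ((n:ℝ)+1)) := by
  have hnum := log_num hc0 hc1 ha0 hac n
  have hden : (0:ℝ) < Qf c (n+1) * (n+1).factorial := by
    have := Qf_pos hc0 (n+1); positivity
  have hxp : (0:ℝ) ≤ x ^ (n+1) := by positivity
  have hn1 : (0:ℝ) < (n:ℝ) + 1 := by positivity
  unfold Tf
  calc Qf a (n+1) * Qf (c - a) (n+1) / (Qf c (n+1) * (n+1).factorial) * x ^ (n+1)
      ≤ (a / ((n:ℝ)+1)) * (Qf c (n+1) * (n+1).factorial) / (Qf c (n+1) * (n+1).factorial)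
          * x ^ (n+1) := by
        gcongr
    _ = a * (x ^ (n+1) / ((n:ℝ)+1)) := by
        rw [mul_div_cancel_right₀ _ hden.ne']; ring

end final

theorem stmt_12 (c x : ℝ) (hc0 : 0 < c) (hc1 : c ≤ 1) (hx : x ∈ Set.Ioo (0 : ℝ) 1) :
    StrictMonoOn (fun a => hypergeom a (c - a) c x - 1) (Set.Ioc 0 (c / 2)) ∧
    StrictAntiOn (fun a => (hypergeom a (c - a) c x - 1) / a) (Set.Ioc 0 (c / 2)) ∧
    ∀ a ∈ Set.Ioc (0 : ℝ) (c / 2),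
      1 + (2 * a / c) * (∑' n : ℕ, ((ascPochhammer ℝ (n + 1)).eval (c / 2)) ^ 2 /
          ((ascPochhammer ℝ (n + 1)).eval c * (n + 1).factorial) * x ^ (n + 1)) ≤
        hypergeom a (c - a) c x ∧
      hypergeom a (c - a) c x ≤ 1 +
        min (∑' n : ℕ, ((ascPochhammer ℝ (n + 1)).eval (c / 2)) ^ 2 /
            ((ascPochhammer ℝ (n + 1)).eval c * (n + 1).factorial) * x ^ (n + 1))
          (a * Real.log (1 / (1 - x))) := by
  obtain ⟨hx0, hx1⟩ := hx
  -- basic facts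
  have hfacts : ∀ a : ℝ, a ∈ Set.Ioc (0:ℝ) (c / 2) →
      0 < a ∧ a ≤ c / 2 ∧ a < c ∧ c - a ≤ 1 := by
    intro a ⟨h1, h2⟩
    exact ⟨h1, h2, by linarith, by linarith⟩
  have hyp_eq : ∀ a : ℝ, hypergeom a (c - a) c x = ∑' n : ℕ, Tf c x a n := fun a =>
    (hypergeom_eq (c - a)).trans (tsum_congr fun n => rfl)
  have hsub : ∀ a : ℝ, a ∈ Set.Ioc (0:ℝ) (c / 2) →
      hypergeom a (c - a) c x - 1 = ∑' n : ℕ, Tf c x a (n + 1) := by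
    intro a ha
    obtain ⟨h1, h2, h3, h4⟩ := hfacts a ha
    exact hypergeom_sub_one hc0 hc1 hx0 hx1 h1 h3 h4
  have hsummable : ∀ a : ℝ, a ∈ Set.Ioc (0:ℝ) (c / 2) → Summable (Tf c x a) := by
    intro a ha
    obtain ⟨h1, h2, h3, h4⟩ := hfacts a ha
    exact Tf_summable hc0 hc1 hx0 hx1 h1 h3 h4
  have hsummable' : ∀ a : ℝ, a ∈ Set.Ioc (0:ℝ) (c / 2) →
      Summable (fun n : ℕ => Tf c x a (n + 1)) := fun a ha =>
    (summable_nat_add_iff 1).2 (hsummable a ha)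
  have hmid : (c / 2) ∈ Set.Ioc (0:ℝ) (c / 2) := ⟨by linarith, le_refl _⟩
  -- the series S
  have hS_eq : (∑' n : ℕ, ((ascPochhammer ℝ (n + 1)).eval (c / 2)) ^ 2 /
      ((ascPochhammer ℝ (n + 1)).eval c * (n + 1).factorial) * x ^ (n + 1))
      = ∑' n : ℕ, Tf c x (c / 2) (n + 1) := by
    refine tsum_congr fun n => ?_
    rw [poch_eq, poch_eq, sq]
    unfold Tf
    rw [show c - c / 2 = c / 2 by ring]
  refine ⟨?_, ?_, ?_⟩
  · -- strict mono
    intro a1 h1 a2 h2 h12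
    obtain ⟨h1a, h1b, h1c, h1d⟩ := hfacts a1 h1
    obtain ⟨h2a, h2b, h2c', h2d⟩ := hfacts a2 h2
    simp only
    have key : ∑' n : ℕ, Tf c x a1 n < ∑' n : ℕ, Tf c x a2 n :=
      Summable.tsum_lt_tsum_of_nonneg (fun n => (Tf_pos hc0 hx0 h1a h1c n).le)
        (fun n => Tf_mono_le hc0 hx0 h1a h12.le h2b n)
        (Tf_mono_lt1 hc0 hx0 h1a h12 h2b)
        (hsummable a2 h2)
    rw [hyp_eq a1, hyp_eq a2]
    linarith
  · -- strict anti
    intro a1 h1 a2 h2 h12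
    obtain ⟨h1a, h1b, h1c, h1d⟩ := hfacts a1 h1
    obtain ⟨h2a, h2b, h2c', h2d⟩ := hfacts a2 h2
    simp only
    rw [hsub a1 h1, hsub a2 h2, ← tsum_div_const, ← tsum_div_const]
    exact Summable.tsum_lt_tsum_of_nonneg
      (fun n => div_nonneg (Tf_pos hc0 hx0 h2a h2c' (n+1)).le h2a.le)
      (fun n => Tf_anti hc0 hc1 hx0 h1a h12.le h2b n)
      (Tf_anti_lt1 hc0 hx0 h1a h12 h2b)
      ((hsummable' a1 h1).div_const a1)
  · -- bounds
    intro a ha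
    obtain ⟨ha0, hab, hac, had⟩ := hfacts a ha
    have hFsub := hsub a ha
    rw [hS_eq]
    constructor
    · -- lower bound
      have hper : ∀ n : ℕ, (2 * a / c) * Tf c x (c / 2) (n + 1) ≤ Tf c x a (n + 1) := by
        intro n
        have h := Tf_anti hc0 hc1 hx0 ha0 hab le_rfl n
        have hc2 : (0:ℝ) < c / 2 := by linarith
        have h2 : a * (Tf c x (c / 2) (n+1) / (c / 2)) ≤ a * (Tf c x a (n+1) / a) :=
          mul_le_mul_of_nonneg_left h ha0.le
        rw [mul_div_cancel₀ _ ha0.ne'] at h2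
        calc (2 * a / c) * Tf c x (c / 2) (n + 1)
            = a * (Tf c x (c / 2) (n+1) / (c / 2)) := by
              field_simp
          _ ≤ Tf c x a (n + 1) := h2
      have hsum_le : ∑' n : ℕ, (2 * a / c) * Tf c x (c / 2) (n + 1) ≤
          ∑' n : ℕ, Tf c x a (n + 1) :=
        Summable.tsum_le_tsum hper ((hsummable' (c/2) hmid).mul_left _) (hsummable' a ha)
      rw [tsum_mul_left] at hsum_le
      linarith [hFsub ▸ hsum_le]
    · -- upper bound
      have hub1 : hypergeom a (c - a) c x - 1 ≤ ∑' n : ℕ, Tf c x (c / 2) (n + 1) := by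
        rw [hFsub]
        exact Summable.tsum_le_tsum (fun n => Tf_mono_le hc0 hx0 ha0 hab le_rfl (n+1))
          (hsummable' a ha) (hsummable' (c/2) hmid)
      have hub2 : hypergeom a (c - a) c x - 1 ≤ a * Real.log (1 / (1 - x)) := by
        rw [hFsub]
        have hlog := Real.hasSum_pow_div_log_of_abs_lt_one
          (by rw [abs_of_pos hx0]; exact hx1 : |x| < 1)
        have hsum2 : Summable (fun n : ℕ => a * (x ^ (n+1) / ((n:ℝ)+1))) :=
          (hlog.summable).mul_left a
        have hle : ∑' n : ℕ, Tf c x a (n + 1) ≤ ∑' n : ℕ, a * (x ^ (n+1) / ((n:ℝ)+1)) :=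
          Summable.tsum_le_tsum (fun n => Tf_le_log_term hc0 hc1 hx0 ha0 hab n)
            (hsummable' a ha) hsum2
        have heq : ∑' n : ℕ, a * (x ^ (n+1) / ((n:ℝ)+1)) = a * (-Real.log (1 - x)) :=
          (hlog.mul_left a).tsum_eq
        rw [heq] at hle
        rw [one_div, Real.log_inv]
        exact hle
      have := le_min hub1 hub2
      linarith
end

section
/- For each fixed c ∈ (0,2) and x ∈ (0,1), the function a ↦ 1 - F(a-1, c-a; c; x) is strictly decreasing in a on (0, c/2]. Consequently, F(a-1, c-a; c; x) ≥ 1 - x for all a ∈ (0, c/2] and F(a-1, c-a; c; x) ≤ 1 - Σ_{n≥1} (1-c/2)(c/2)_{n-1}(c/2)_n x^n/((c)_n n!) with equality iff a = c/2. -/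
open Polynomial

noncomputable def P (n : ℕ) (t : ℝ) : ℝ := (ascPochhammer ℝ n).eval t

lemma P_zero (t : ℝ) : P 0 t = 1 := by simp [P]
lemma P_one' (t : ℝ) : P 1 t = t := by simp [P, ascPochhammer_one]
lemma P_succ (n : ℕ) (t : ℝ) : P (n+1) t = P n t * (t + n) := ascPochhammer_succ_eval n t
lemma P_succ_left (n : ℕ) (t : ℝ) : P (n+1) t = t * P n (t+1) := by
  simp [P, ascPochhammer_succ_left, Polynomial.eval_comp]
lemma P_pos (n : ℕ) {t : ℝ} (h : 0 < t) : 0 < P n t := ascPochhammer_pos n t h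
lemma P_mono (n : ℕ) {s t : ℝ} (hs : 0 < s) (hst : s ≤ t) : P n s ≤ P n t := by
  induction n with
  | zero => simp [P_zero]
  | succ n ih =>
    rw [P_succ, P_succ]
    exact mul_le_mul ih (by linarith) (by positivity) (P_pos n (lt_of_lt_of_le hs hst)).le
lemma P_three (n : ℕ) : P n 3 = (n+2).factorial / 2 := by
  induction n with
  | zero => simp [P_zero]
  | succ n ih =>
    have hf : (((n+1)+2).factorial : ℝ) = ((n:ℝ)+3) * (n+2).factorial := by
      rw [show (n+1)+2 = (n+2)+1 from rfl, Nat.factorial_succ]; push_cast; ring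
    rw [P_succ, ih, hf]; ring

noncomputable def A (c a : ℝ) (n : ℕ) : ℝ := P n a * P n (c - a + 1) / (P n c * n.factorial)
noncomputable def B (c a : ℝ) (n : ℕ) : ℝ := P n (a-1) * P n (c-a) / (P n c * n.factorial)

lemma A_zero (c a : ℝ) : A c a 0 = 1 := by simp [A, P_zero]
lemma B_zero (c a : ℝ) : B c a 0 = 1 := by simp [B, P_zero]

lemma B_succ {c : ℝ} (hc0 : 0 < c) (a : ℝ) (n : ℕ) :
    B c a (n+1) = A c a (n+1) - A c a n := by
  have hPc : 0 < P n c := P_pos n hc0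
  have hcn : (0:ℝ) < c + n := by positivity
  have hfac : (0:ℝ) < (n.factorial : ℝ) := by positivity
  have h1 : P (n+1) (a-1) = (a-1) * P n a := by
    rw [P_succ_left, show a - 1 + 1 = a from by ring]
  have h2 : P (n+1) (c-a) = (c-a) * P n (c-a+1) := by
    rw [P_succ_left]
  have hfs : (((n+1).factorial : ℕ) : ℝ) = ((n:ℝ)+1) * n.factorial := by
    rw [Nat.factorial_succ]; push_cast; ring
  unfold A B
  rw [h1, h2, P_succ n a, P_succ n (c-a+1), P_succ n c, hfs]
  field_simp
  ring

lemma A_nonneg {c a : ℝ} (hc0 : 0 < c) (ha : 0 < a) (hca : a < c + 1) (n : ℕ) :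
    0 ≤ A c a n := by
  have h1 : 0 < P n a := P_pos n ha
  have h2 : 0 < P n (c - a + 1) := P_pos n (by linarith)
  have h3 : 0 < P n c := P_pos n hc0
  have h4 : (0:ℝ) < n.factorial := by positivity
  unfold A; positivity

lemma A_le {c a : ℝ} (hc0 : 0 < c) (ha : 0 < a) (hac : a ≤ c) (h3 : c - a + 1 ≤ 3)
    (n : ℕ) : A c a n ≤ ((n:ℝ)+1)*((n:ℝ)+2)/2 := by
  have hPc : 0 < P n c := P_pos n hc0
  have hfac : (0:ℝ) < (n.factorial : ℝ) := by positivity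
  have h1 : P n a ≤ P n c := P_mono n ha hac
  have h2 : P n (c-a+1) ≤ P n 3 := P_mono n (by linarith) h3
  have h2' : 0 ≤ P n (c-a+1) := (P_pos n (by linarith)).le
  have h1' : 0 ≤ P n a := (P_pos n ha).le
  have hfs : (((n+2).factorial : ℕ) : ℝ) = ((n:ℝ)+2) * (((n:ℝ)+1) * n.factorial) := by
    rw [show n+2 = (n+1)+1 from rfl, Nat.factorial_succ, Nat.factorial_succ]; push_cast; ring
  have key : P n a * P n (c-a+1) ≤ P n c * P n 3 :=
    mul_le_mul h1 h2 h2' hPc.le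
  calc A c a n ≤ P n c * P n 3 / (P n c * n.factorial) := by
        unfold A; gcongr
      _ = ((n:ℝ)+1)*((n:ℝ)+2)/2 := by
        rw [P_three, hfs]; field_simp

lemma summable_bound {x : ℝ} (hx0 : 0 < x) (hx1 : x < 1) :
    Summable (fun n : ℕ => ((n:ℝ)+1)*((n:ℝ)+2)/2 * x^n) := by
  have hx : ‖x‖ < 1 := by rw [Real.norm_eq_abs, abs_of_pos hx0]; exact hx1
  have h2 : Summable (fun n : ℕ => (n:ℝ)^2 * x^n) :=
    summable_pow_mul_geometric_of_norm_lt_one 2 hx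
  have h1 : Summable (fun n : ℕ => (n:ℝ)^1 * x^n) :=
    summable_pow_mul_geometric_of_norm_lt_one 1 hx
  have h0 : Summable (fun n : ℕ => (n:ℝ)^0 * x^n) :=
    summable_pow_mul_geometric_of_norm_lt_one 0 hx
  have := (((h2.add (h1.mul_left 3)).add (h0.mul_left 2)).div_const 2)
  exact this.congr (fun n => by push_cast; ring)

lemma summable_A {c a x : ℝ} (hc0 : 0 < c) (hc2 : c < 2) (ha : 0 < a) (hac2 : a ≤ c/2)
    (hx0 : 0 < x) (hx1 : x < 1) : Summable (fun n : ℕ => A c a n * x^n) := by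
  refine Summable.of_nonneg_of_le
    (fun n => mul_nonneg (A_nonneg hc0 ha (by linarith) n) (pow_nonneg hx0.le n))
    (fun n => ?_) (summable_bound hx0 hx1)
  exact mul_le_mul_of_nonneg_right (A_le hc0 ha (by linarith) (by linarith) n)
    (pow_nonneg hx0.le n)

lemma G_eq {c a x : ℝ} (hc0 : 0 < c) (hc2 : c < 2) (ha : 0 < a) (hac2 : a ≤ c/2)
    (hx0 : 0 < x) (hx1 : x < 1) :
    Summable (fun n : ℕ => B c a n * x^n) ∧
    ∑' n : ℕ, B c a n * x^n = (1-x) * ∑' n : ℕ, A c a n * x^n := by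
  have hA : Summable (fun n : ℕ => A c a n * x^n) := summable_A hc0 hc2 ha hac2 hx0 hx1
  have hA1 : Summable (fun n : ℕ => A c a (n+1) * x^(n+1)) :=
    (summable_nat_add_iff (f := fun n : ℕ => A c a n * x^n) 1).2 hA
  have hA2 : Summable (fun n : ℕ => A c a n * x^(n+1)) :=
    (hA.mul_left x).congr (fun n => by ring)
  have hBs : Summable (fun n : ℕ => B c a (n+1) * x^(n+1)) :=
    (hA1.sub hA2).congr (fun n => by rw [B_succ hc0]; ring)
  have hB : Summable (fun n : ℕ => B c a n * x^n) :=
    (summable_nat_add_iff (f := fun n : ℕ => B c a n * x^n) 1).1 hBs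
  refine ⟨hB, ?_⟩
  have e1 : ∑' n : ℕ, B c a n * x^n = 1 + ∑' n : ℕ, B c a (n+1) * x^(n+1) := by
    rw [Summable.tsum_eq_zero_add hB, B_zero, pow_zero, mul_one]
  have e2 : ∑' n : ℕ, B c a (n+1) * x^(n+1)
      = (∑' n : ℕ, A c a (n+1) * x^(n+1)) - ∑' n : ℕ, A c a n * x^(n+1) := by
    rw [← Summable.tsum_sub hA1 hA2]
    exact tsum_congr fun n => by rw [B_succ hc0]; ring
  have e3 : ∑' n : ℕ, A c a (n+1) * x^(n+1) = (∑' n : ℕ, A c a n * x^n) - 1 := by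
    have h := Summable.tsum_eq_zero_add hA
    rw [A_zero, pow_zero, mul_one] at h
    linarith
  have e4 : ∑' n : ℕ, A c a n * x^(n+1) = x * ∑' n : ℕ, A c a n * x^n := by
    rw [← tsum_mul_left]
    exact tsum_congr fun n => by ring
  rw [e1, e2, e3, e4]; ring

lemma prod_mono {c a b : ℝ} (ha : 0 < a) (hab : a ≤ b) (hsum : a + b < c + 1) (n : ℕ) :
    P n a * P n (c-a+1) ≤ P n b * P n (c-b+1) := by
  have hca : 0 < c - a + 1 := by linarith
  have hcb : 0 < c - b + 1 := by linarith
  have hb : 0 < b := lt_of_lt_of_le ha hab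
  induction n with
  | zero => simp [P_zero]
  | succ n ih =>
    rw [P_succ, P_succ, P_succ, P_succ]
    have key : (a+(n:ℝ))*(c-a+1+(n:ℝ)) ≤ (b+(n:ℝ))*(c-b+1+(n:ℝ)) := by nlinarith
    calc P n a * (a+(n:ℝ)) * (P n (c-a+1) * (c-a+1+(n:ℝ)))
        = (P n a * P n (c-a+1)) * ((a+(n:ℝ))*(c-a+1+(n:ℝ))) := by ring
      _ ≤ (P n b * P n (c-b+1)) * ((b+(n:ℝ))*(c-b+1+(n:ℝ))) :=
          mul_le_mul ih key (by positivity)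
            (mul_nonneg (P_pos n hb).le (P_pos n hcb).le)
      _ = P n b * (b+(n:ℝ)) * (P n (c-b+1) * (c-b+1+(n:ℝ))) := by ring

lemma A_le_A {c a b : ℝ} (hc0 : 0 < c) (ha : 0 < a) (hab : a ≤ b) (hsum : a + b < c + 1)
    (n : ℕ) : A c a n ≤ A c b n := by
  have hPc : 0 < P n c := P_pos n hc0
  have hfac : (0:ℝ) < (n.factorial : ℝ) := by positivity
  unfold A
  rw [div_le_div_iff_of_pos_right (by positivity)]
  exact prod_mono ha hab hsum n

lemma H_lt {c a b x : ℝ} (hc0 : 0 < c) (hc2 : c < 2) (ha : 0 < a) (hab : a < b)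
    (hb2 : b ≤ c/2) (hx0 : 0 < x) (hx1 : x < 1) :
    ∑' n : ℕ, A c a n * x^n < ∑' n : ℕ, A c b n * x^n := by
  have hb : 0 < b := lt_trans ha hab
  have hsum : a + b < c + 1 := by linarith
  refine Summable.tsum_lt_tsum (i := 1)
    (fun n => mul_le_mul_of_nonneg_right (A_le_A hc0 ha hab.le hsum n) (pow_nonneg hx0.le n))
    ?_ (summable_A hc0 hc2 ha (by linarith) hx0 hx1) (summable_A hc0 hc2 hb hb2 hx0 hx1)
  have h1 : A c a 1 < A c b 1 := by
    unfold A
    simp only [P_one']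
    apply (div_lt_div_iff_of_pos_right (by positivity)).2
    nlinarith
  exact mul_lt_mul_of_pos_right h1 (pow_pos hx0 1)

lemma hyper_eq (c a x : ℝ) : hypergeom (a-1) (c-a) c x = ∑' n : ℕ, B c a n * x^n := rfl

theorem stmt_13 (c x : ℝ) (hc0 : 0 < c) (hc2 : c < 2) (hx : x ∈ Set.Ioo (0 : ℝ) 1) :
    StrictAntiOn (fun a => 1 - hypergeom (a - 1) (c - a) c x) (Set.Ioc 0 (c / 2)) ∧
    ∀ a ∈ Set.Ioc (0 : ℝ) (c / 2),
      1 - x ≤ hypergeom (a - 1) (c - a) c x ∧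
      hypergeom (a - 1) (c - a) c x ≤ 1 -
        ∑' n : ℕ, (1 - c / 2) * (ascPochhammer ℝ n).eval (c / 2) *
          (ascPochhammer ℝ (n + 1)).eval (c / 2) /
          ((ascPochhammer ℝ (n + 1)).eval c * (n + 1).factorial) * x ^ (n + 1) ∧
      (hypergeom (a - 1) (c - a) c x = 1 -
        ∑' n : ℕ, (1 - c / 2) * (ascPochhammer ℝ n).eval (c / 2) *
          (ascPochhammer ℝ (n + 1)).eval (c / 2) /
          ((ascPochhammer ℝ (n + 1)).eval c * (n + 1).factorial) * x ^ (n + 1) ↔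
        a = c / 2) := by
  obtain ⟨hx0, hx1⟩ := hx
  have hc2' : (0:ℝ) < c/2 := by linarith
  have hGmono : ∀ a b : ℝ, a ∈ Set.Ioc (0:ℝ) (c/2) → b ∈ Set.Ioc (0:ℝ) (c/2) → a < b →
      hypergeom (a-1) (c-a) c x < hypergeom (b-1) (c-b) c x := by
    intro a b ha hb hab
    rw [hyper_eq, hyper_eq, (G_eq hc0 hc2 ha.1 ha.2 hx0 hx1).2,
      (G_eq hc0 hc2 hb.1 hb.2 hx0 hx1).2]
    exact mul_lt_mul_of_pos_left (H_lt hc0 hc2 ha.1 hab hb.2 hx0 hx1) (by linarith)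
  have hmem : c/2 ∈ Set.Ioc (0:ℝ) (c/2) := ⟨hc2', le_refl _⟩
  have hSid : (∑' n : ℕ, (1 - c / 2) * (ascPochhammer ℝ n).eval (c / 2) *
          (ascPochhammer ℝ (n + 1)).eval (c / 2) /
          ((ascPochhammer ℝ (n + 1)).eval c * (n + 1).factorial) * x ^ (n + 1))
      = 1 - hypergeom (c/2 - 1) (c - c/2) c x := by
    have hB := (G_eq hc0 hc2 hc2' (le_refl _) hx0 hx1).1
    have hterm : ∀ n : ℕ, (1 - c / 2) * (ascPochhammer ℝ n).eval (c / 2) *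
          (ascPochhammer ℝ (n + 1)).eval (c / 2) /
          ((ascPochhammer ℝ (n + 1)).eval c * (n + 1).factorial) * x ^ (n + 1)
        = -(B c (c/2) (n+1) * x^(n+1)) := by
      intro n
      have h1 : P (n+1) (c/2-1) = (c/2-1) * P n (c/2) := by
        rw [P_succ_left, show c/2 - 1 + 1 = c/2 from by ring]
      show (1 - c/2) * P n (c/2) * P (n+1) (c/2) / (P (n+1) c * ((n+1).factorial : ℝ))
          * x^(n+1) = -(B c (c/2) (n+1) * x^(n+1))
      unfold B
      rw [show c - c/2 = c/2 from by ring, h1]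
      ring
    rw [tsum_congr hterm, tsum_neg, hyper_eq]
    have h := Summable.tsum_eq_zero_add hB
    rw [B_zero, pow_zero, mul_one] at h
    linarith
  refine ⟨?_, ?_⟩
  · intro a ha b hb hab
    simp only
    have := hGmono a b ha hb hab
    linarith
  · intro a ha
    have hGa := G_eq hc0 hc2 ha.1 ha.2 hx0 hx1
    refine ⟨?_, ?_, ?_⟩
    · rw [hyper_eq, hGa.2]
      have hA : Summable (fun n : ℕ => A c a n * x^n) :=
        summable_A hc0 hc2 ha.1 ha.2 hx0 hx1
      have h1 : (1:ℝ) ≤ ∑' n : ℕ, A c a n * x^n := by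
        have h0 := Summable.le_tsum hA 0 (fun j _ =>
          mul_nonneg (A_nonneg hc0 ha.1 (by linarith [ha.2]) j) (pow_nonneg hx0.le j))
        rw [A_zero, pow_zero, mul_one] at h0
        exact h0
      nlinarith
    · rw [hSid, sub_sub_cancel]
      rcases eq_or_lt_of_le ha.2 with he | hlt
      · exact le_of_eq (by rw [he])
      · exact (hGmono a (c/2) ha hmem hlt).le
    · rw [hSid, sub_sub_cancel]
      constructor
      · intro hEq
        by_contra hne
        have hlt : a < c/2 := lt_of_le_of_ne ha.2 hne
        exact absurd hEq (ne_of_lt (hGmono a (c/2) ha hmem hlt))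
      · intro he; rw [he]
end

section
/- For n ∈ ℕ₀ fixed, the infimum over a ∈ (0,1/2] of λ₉(a) = 1 + a[ψ(n+1+a) - ψ(n+2-a) + ψ(1-a) - ψ(a)] equals 1, attained at a = 1/2. -/
lemma digamma_diff_mono (n : ℕ) {a : ℝ} (ha : 0 < a) (ha2 : a ≤ 1 / 2) :
    digamma (1 + a) - digamma (2 - a) ≤ digamma (n + 1 + a) - digamma (n + 2 - a) := by
  induction n with
  | zero => norm_num
  | succ k ih =>
    have hk1 : (0:ℝ) < k + 1 + a := by positivity
    have hk2 : (0:ℝ) < k + 2 - a := by nlinarith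
    have e1 : ((k:ℝ) + 1) + 1 + a = (k + 1 + a) + 1 := by ring
    have e2 : ((k:ℝ) + 1) + 2 - a = (k + 2 - a) + 1 := by ring
    push_cast
    rw [e1, e2, digamma_add_one hk1, digamma_add_one hk2]
    have hle : 1 / (k + 2 - a) ≤ 1 / (k + 1 + a) := by
      apply one_div_le_one_div_of_le hk1; linarith
    linarith

theorem stmt_15 (n : ℕ) :
    IsLeast ((fun a : ℝ => 1 + a * (digamma (n + 1 + a) - digamma (n + 2 - a) +
        digamma (1 - a) - digamma a)) '' Set.Ioc 0 (1 / 2)) 1 ∧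
    1 + (1 / 2 : ℝ) * (digamma (n + 1 + (1 / 2 : ℝ)) - digamma (n + 2 - (1 / 2 : ℝ)) +
        digamma (1 - (1 / 2 : ℝ)) - digamma (1 / 2 : ℝ)) = 1 := by
  have hval : (1:ℝ) + (1 / 2 : ℝ) * (digamma (n + 1 + (1 / 2 : ℝ)) - digamma (n + 2 - (1 / 2 : ℝ)) +
      digamma (1 - (1 / 2 : ℝ)) - digamma (1 / 2 : ℝ)) = 1 := by
    have e1 : (n:ℝ) + 1 + (1 / 2 : ℝ) = (n:ℝ) + 2 - (1 / 2 : ℝ) := by ring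
    have e2 : (1:ℝ) - (1 / 2 : ℝ) = (1 / 2 : ℝ) := by norm_num
    rw [e1, e2]; ring
  refine ⟨⟨⟨1/2, by norm_num, hval⟩, ?_⟩, hval⟩
  rintro x ⟨a, ⟨ha, ha2⟩, rfl⟩
  have ha1 : (0:ℝ) < 1 - a := by linarith
  have key : 0 ≤ digamma (n + 1 + a) - digamma (n + 2 - a) + digamma (1 - a) - digamma a := by
    have hmono := digamma_diff_mono n ha ha2
    have r1 : digamma (1 + a) = digamma a + 1 / a := by
      rw [add_comm, digamma_add_one ha]
    have r2 : digamma (2 - a) = digamma (1 - a) + 1 / (1 - a) := by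
      have : (2:ℝ) - a = (1 - a) + 1 := by ring
      rw [this, digamma_add_one ha1]
    have hfrac : 1 / (1 - a) ≤ 1 / a := by
      apply one_div_le_one_div_of_le ha; linarith
    rw [r1, r2] at hmono
    linarith
  show (1:ℝ) ≤ 1 + a * (digamma (n + 1 + a) - digamma (n + 2 - a) + digamma (1 - a) - digamma a)
  nlinarith [mul_nonneg ha.le key]
end

section
/- Define z(a) = [a/(1-a)] · [sin(πa) + π(1-a)cos(πa) - π(1-a)²] / [sin(πa) - πa(1-a)] for a ∈ (0,1/2]. Then z(a) < 2 for all a ∈ (0,1/2], lim_{a→0⁺} z(a) = 2, and hence sup_{a∈(0,1/2]} z(a) = 2. -/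
set_option maxHeartbeats 800000

open Real Set Filter

lemma sin_lb {x : ℝ} (hx : 0 < x) : x - x ^ 3 / 6 < Real.sin x := by
  have hmono : StrictMonoOn (fun y : ℝ => Real.sin y - y + y ^ 3 / 6) (Set.Ici 0) := by
    apply strictMonoOn_of_deriv_pos (convex_Ici 0)
    · fun_prop
    · intro y hy
      rw [interior_Ici] at hy
      have hd : HasDerivAt (fun y : ℝ => Real.sin y - y + y ^ 3 / 6)
          (Real.cos y - 1 + 3 * y ^ 2 / 6) y := by
        have := ((Real.hasDerivAt_sin y).sub (hasDerivAt_id y)).add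
          ((hasDerivAt_pow 3 y).div_const 6)
        exact this.congr_deriv (by norm_num <;> ring)
      rw [hd.deriv]
      have := Real.one_sub_sq_div_two_lt_cos (x := y) (ne_of_gt hy)
      nlinarith
  have h := hmono (Set.self_mem_Ici) (Set.mem_Ici.2 hx.le) hx
  simp at h
  nlinarith [h]

lemma cos_ub {x : ℝ} (hx : 0 < x) : Real.cos x < 1 - x ^ 2 / 2 + x ^ 4 / 24 := by
  have hmono : StrictMonoOn (fun y : ℝ => 1 - y ^ 2 / 2 + y ^ 4 / 24 - Real.cos y)
      (Set.Ici 0) := by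
    apply strictMonoOn_of_deriv_pos (convex_Ici 0)
    · fun_prop
    · intro y hy
      rw [interior_Ici] at hy
      have hd : HasDerivAt (fun y : ℝ => 1 - y ^ 2 / 2 + y ^ 4 / 24 - Real.cos y)
          (0 - 2 * y / 2 + 4 * y ^ 3 / 24 - (-Real.sin y)) y := by
        have := (((hasDerivAt_const y (1:ℝ)).sub ((hasDerivAt_pow 2 y).div_const 2)).add
          ((hasDerivAt_pow 4 y).div_const 24)).sub (Real.hasDerivAt_cos y)
        exact this.congr_deriv (by norm_num <;> ring)
      rw [hd.deriv]
      have := sin_lb hy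
      nlinarith
  have h := hmono (Set.self_mem_Ici) (Set.mem_Ici.2 hx.le) hx
  simp at h
  nlinarith [h]

noncomputable def z (a : ℝ) : ℝ :=
  (a / (1 - a)) *
    ((Real.sin (Real.pi * a) + Real.pi * (1 - a) * Real.cos (Real.pi * a) -
        Real.pi * (1 - a) ^ 2) /
      (Real.sin (Real.pi * a) - Real.pi * a * (1 - a)))

lemma pi_sq_lt : Real.pi ^ 2 < 9.9225 := by
  nlinarith [Real.pi_lt_d2, Real.pi_pos]

lemma pi_sq_gt : 9.8696 < Real.pi ^ 2 := by
  nlinarith [Real.pi_gt_d6, Real.pi_pos]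

lemma pi_pow4_lt : Real.pi ^ 4 < 98.46 := by
  nlinarith [mul_pos (sub_pos.2 pi_sq_lt) (by positivity : (0:ℝ) < 9.9225 + Real.pi ^ 2)]

lemma denom_pos {a : ℝ} (ha : 0 < a) (ha' : a ≤ 1 / 2) :
    0 < Real.sin (Real.pi * a) - Real.pi * a * (1 - a) := by
  have hx : 0 < Real.pi * a := by positivity
  have hs := sin_lb hx
  have h6 : Real.pi ^ 2 * a < 6 := by nlinarith [pi_sq_lt]
  nlinarith [mul_pos (mul_pos Real.pi_pos (mul_pos ha ha)) (sub_pos.2 h6)]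

lemma z_eq (a : ℝ) :
    z a = (a * (Real.sin (Real.pi * a) + Real.pi * (1 - a) * Real.cos (Real.pi * a) -
        Real.pi * (1 - a) ^ 2)) /
      ((1 - a) * (Real.sin (Real.pi * a) - Real.pi * a * (1 - a))) := by
  rw [z, div_mul_div_comm]

lemma z_lt_two {a : ℝ} (ha : 0 < a) (ha' : a ≤ 1 / 2) : z a < 2 := by
  have h1a : 0 < 1 - a := by linarith
  have hx : 0 < Real.pi * a := by positivity
  have hD := denom_pos ha ha'
  have hden : 0 < (1 - a) * (Real.sin (Real.pi * a) - Real.pi * a * (1 - a)) :=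
    mul_pos h1a hD
  rw [z_eq, div_lt_iff₀ hden]
  have hs := sin_lb hx
  have hc := cos_ub hx
  have h1 : Real.pi * a * (1 - a) * Real.cos (Real.pi * a) ≤
      Real.pi * a * (1 - a) * (1 - (Real.pi * a) ^ 2 / 2 + (Real.pi * a) ^ 4 / 24) :=
    mul_le_mul_of_nonneg_left hc.le (by positivity)
  have h2 : (2 - 3 * a) * (Real.pi * a - (Real.pi * a) ^ 3 / 6) <
      (2 - 3 * a) * Real.sin (Real.pi * a) :=
    mul_lt_mul_of_pos_left hs (by linarith)
  have hcube : a ^ 2 * (1 - a) ≤ 1 / 8 := by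
    nlinarith [mul_nonneg (by linarith : (0:ℝ) ≤ 1 - 2 * a)
      (by nlinarith : (0:ℝ) ≤ 1 + 2 * a - 4 * a ^ 2)]
  have hbr : (1 - Real.pi ^ 2 / 6) + Real.pi ^ 4 / 192 < 0 := by
    nlinarith [pi_sq_gt, pi_pow4_lt]
  have hg : a ^ 2 * (1 - Real.pi ^ 2 / 6) + Real.pi ^ 4 * (a ^ 4 * (1 - a)) / 24 < 0 := by
    nlinarith [mul_pos ha ha, mul_le_mul_of_nonneg_left hcube
      (by positivity : (0:ℝ) ≤ Real.pi ^ 4 * a ^ 2), hbr, sq_nonneg a]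
  have hfin : Real.pi * a * (a ^ 2 * (1 - Real.pi ^ 2 / 6) +
      Real.pi ^ 4 * (a ^ 4 * (1 - a)) / 24) < 0 := mul_neg_of_pos_of_neg hx hg
  nlinarith [h1, h2, hfin]

lemma z_lb {a : ℝ} (ha : 0 < a) (ha' : a < 1 / 2) : 2 - 100 * a ≤ z a := by
  have h1a : 0 < 1 - a := by linarith
  have hx : 0 < Real.pi * a := by positivity
  have hD := denom_pos ha ha'.le
  have hden : 0 < (1 - a) * (Real.sin (Real.pi * a) - Real.pi * a * (1 - a)) :=
    mul_pos h1a hD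
  rw [z_eq, le_div_iff₀ hden]
  have hsl := Real.sin_lt hx
  have hsg := sin_lb hx
  have hcg := Real.one_sub_sq_div_two_le_cos (x := Real.pi * a)
  have h1 : Real.pi * a * (1 - a) * (1 - (Real.pi * a) ^ 2 / 2) ≤
      Real.pi * a * (1 - a) * Real.cos (Real.pi * a) :=
    mul_le_mul_of_nonneg_left hcg (by positivity)
  have h2 : (2 - 3 * a) * Real.sin (Real.pi * a) < (2 - 3 * a) * (Real.pi * a) :=
    mul_lt_mul_of_pos_left hsl (by linarith)
  -- claim1 : f ≥ π a^3 (1 - π²/2)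
  have h4 : (0:ℝ) ≤ Real.pi ^ 3 * a ^ 4 / 2 := by positivity
  have claim1 : Real.pi * a ^ 3 * (1 - Real.pi ^ 2 / 2) ≤
      Real.pi * a * (1 - a) * Real.cos (Real.pi * a) +
        (3 * a - 2) * Real.sin (Real.pi * a) + Real.pi * a * (1 - a) ^ 2 := by
    nlinarith [h1, h2, h4]
  -- claim2 : 100 a (1-a) D ≥ π a^3 (π²/2 - 1)
  have hDlb : Real.pi * a ^ 2 - Real.pi ^ 3 * a ^ 3 / 6 <
      Real.sin (Real.pi * a) - Real.pi * a * (1 - a) := by nlinarith [hsg]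
  have h6 : Real.pi ^ 2 * a < 6 := by nlinarith [pi_sq_lt]
  have hDlb0 : 0 < Real.pi * a ^ 2 - Real.pi ^ 3 * a ^ 3 / 6 := by
    nlinarith [mul_pos (mul_pos Real.pi_pos (mul_pos ha ha)) (sub_pos.2 h6)]
  have hstep : 50 * a * (Real.pi * a ^ 2 - Real.pi ^ 3 * a ^ 3 / 6) ≤
      100 * a * (1 - a) * (Real.sin (Real.pi * a) - Real.pi * a * (1 - a)) := by
    nlinarith [mul_nonneg (mul_nonneg (by linarith : (0:ℝ) ≤ 50 * a)
        (by linarith : (0:ℝ) ≤ 1 - 2 * a)) hD.le,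
      mul_le_mul_of_nonneg_left hDlb.le (by linarith : (0:ℝ) ≤ 50 * a)]
  have hscal : Real.pi * a ^ 3 * (Real.pi ^ 2 / 2 - 1) ≤
      50 * a * (Real.pi * a ^ 2 - Real.pi ^ 3 * a ^ 3 / 6) := by
    nlinarith [pi_sq_lt, mul_pos (mul_pos Real.pi_pos ha) (mul_pos ha ha),
      mul_pos Real.pi_pos (mul_pos ha ha)]
  nlinarith [claim1, hstep, hscal]

theorem stmt_17 :
    (∀ a ∈ Set.Ioc (0 : ℝ) (1 / 2), z a < 2) ∧
    Filter.Tendsto z (nhdsWithin 0 (Set.Ioi 0)) (nhds 2) ∧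
    IsLUB (z '' Set.Ioc 0 (1 / 2)) 2 := by
  have part1 : ∀ a ∈ Set.Ioc (0 : ℝ) (1 / 2), z a < 2 := fun a ha => z_lt_two ha.1 ha.2
  have hmem : Set.Ioo (0:ℝ) (1/2) ∈ nhdsWithin (0:ℝ) (Set.Ioi 0) :=
    Ioo_mem_nhdsGT (by norm_num)
  have part2 : Filter.Tendsto z (nhdsWithin 0 (Set.Ioi 0)) (nhds 2) := by
    have t1 : Filter.Tendsto (fun a : ℝ => 2 - 100 * a) (nhdsWithin 0 (Set.Ioi 0)) (nhds 2) := by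
      have : Filter.Tendsto (fun a : ℝ => 2 - 100 * a) (nhds 0) (nhds (2 - 100 * 0)) := by
        exact (tendsto_const_nhds.sub (tendsto_const_nhds.mul tendsto_id))
      simpa using this.mono_left nhdsWithin_le_nhds
    refine tendsto_of_tendsto_of_tendsto_of_le_of_le' t1 tendsto_const_nhds ?_ ?_
    · filter_upwards [hmem] with a ha
      exact z_lb ha.1 ha.2
    · filter_upwards [hmem] with a ha
      exact (z_lt_two ha.1 ha.2.le).le
  refine ⟨part1, part2, ?_, ?_⟩
  · rintro y ⟨a, ha, rfl⟩
    exact (part1 a ha).le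
  · intro b hb
    refine le_of_tendsto part2 ?_
    filter_upwards [hmem] with a ha
    exact hb ⟨a, ⟨ha.1, ha.2.le⟩, rfl⟩
end
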